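/- arXiv:2311.02663 — 2 statements merged into one kernel-verified Lean document; each statement's English description precedes it below -/
import Mathlib

section
/- Let W and W′ be real Banach spaces, D ⊆ W a linear subspace, and d : D → W′ a linear map (not assumed continuous). Let V_h ⊆ W and V′_h ⊆ W′ be closed subspaces with V_h ⊆ D and d(V_h) ⊆ V′_h. Let Q : W → W and Q′ : W′ → W′ be bounded linear operators with Q(W) ⊆ V_h and Q′(W′) ⊆ V′_h, satisfying the commutation relation Q′(d x) = d(Q x) for all x ∈ D, and suppose there is 0 ≤ ε < 1 with ‖Q v − v‖ ≤ ε‖v‖ for all v ∈ V_h and ‖Q′ v′ − v′‖ ≤ ε‖v′‖ for all v′ ∈ V′_h. Then the projections π := (Q|_{V_h})^{-1} ∘ Q and π′ := (Q′|_{V′_h})^{-1} ∘ Q′ satisfy the commutation relation π′(d x) = d(π x) for all x ∈ D. -/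
theorem eq_zero_of_norm_map_sub_le_of_map_eq_zero {E : Type*} [NormedAddCommGroup E]
    {T : E → E} {ε : ℝ} (hε : ε < 1) {v : E} (hnear : ‖T v - v‖ ≤ ε * ‖v‖) (hTv : T v = 0) :
    v = 0 := by
  rw [hTv, zero_sub, norm_neg] at hnear
  exact norm_le_zero_iff.mp (by nlinarith [norm_nonneg v])

theorem injOn_of_norm_map_sub_le {E 𝓕 S : Type*} [NormedAddCommGroup E]
    [FunLike 𝓕 E E] [AddMonoidHomClass 𝓕 E E] [SetLike S E] [AddSubgroupClass S E]
    {T : 𝓕} {V : S} {ε : ℝ} (hε : ε < 1) (hnear : ∀ v ∈ V, ‖T v - v‖ ≤ ε * ‖v‖) :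
    Set.InjOn T V := by
  intro v hv w hw hTvw
  rw [← sub_eq_zero]
  refine eq_zero_of_norm_map_sub_le_of_map_eq_zero hε (hnear _ (sub_mem hv hw)) ?_
  rw [map_sub, sub_eq_zero]
  exact hTvw

theorem smoothed_projections_commute_general
    {W W' : Type*}
    [NormedAddCommGroup W] [NormedSpace ℝ W]
    [NormedAddCommGroup W'] [NormedSpace ℝ W']
    (D : Submodule ℝ W) (d : D →ₗ[ℝ] W')
    (Vh : Submodule ℝ W) (Vh' : Submodule ℝ W')
    (hVhD : Vh ≤ D)
    (hdVh : ∀ (v : W) (hv : v ∈ Vh), d ⟨v, hVhD hv⟩ ∈ Vh')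
    (Q : W →L[ℝ] W) (Q' : W' →L[ℝ] W')
    (hQr : ∀ x : W, Q x ∈ Vh)
    (hcomm : ∀ x : D, Q' (d x) = d ⟨Q x, hVhD (hQr x)⟩)
    (ε : ℝ) (hε1 : ε < 1)
    (hQ'near : ∀ v' ∈ Vh', ‖Q' v' - v'‖ ≤ ε * ‖v'‖)
    (π : W →L[ℝ] W) (π' : W' →L[ℝ] W')
    (hπmem : ∀ x : W, π x ∈ Vh) (hπ'mem : ∀ y : W', π' y ∈ Vh')
    (hπdef : ∀ x : W, Q (π x) = Q x) (hπ'def : ∀ y : W', Q' (π' y) = Q' y) :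
    ∀ x : D, π' (d x) = d ⟨π x, hVhD (hπmem x)⟩ := by
  intro x
  refine injOn_of_norm_map_sub_le hε1 hQ'near (hπ'mem _) (hdVh _ (hπmem x)) ?_
  calc Q' (π' (d x)) = Q' (d x) := hπ'def _
    _ = d ⟨Q x, hVhD (hQr x)⟩ := hcomm x
    _ = d ⟨Q (π x), hVhD (hQr (π x))⟩ := congrArg d (Subtype.ext (hπdef x).symm)
    _ = Q' (d ⟨π x, hVhD (hπmem x)⟩) := (hcomm ⟨π x, hVhD (hπmem x)⟩).symm

/-- Commuting quasi-interpolants yield commuting smoothed projections.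
Here `d : D → W′` is a linear (not necessarily continuous) map on a subspace `D ⊆ W`,
`Q, Q′` are bounded operators with ranges in the closed subspaces `V_h ⊆ D`, `V′_h`,
commuting with `d` and uniformly `ε`-close to the identity on the discrete spaces
(`0 ≤ ε < 1`).  The projections `π = (Q|_{V_h})⁻¹ ∘ Q` and `π′ = (Q′|_{V′_h})⁻¹ ∘ Q′`
are characterized by: `π x ∈ V_h` and `Q (π x) = Q x` (and similarly for `π′`), since
`Q|_{V_h}` is injective.  The conclusion is `π′ (d x) = d (π x)` for all `x ∈ D`. -/
theorem smoothed_projections_commute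
    {W W' : Type*}
    [NormedAddCommGroup W] [NormedSpace ℝ W] [CompleteSpace W]
    [NormedAddCommGroup W'] [NormedSpace ℝ W'] [CompleteSpace W']
    (D : Submodule ℝ W) (d : D →ₗ[ℝ] W')
    (Vh : Submodule ℝ W) (Vh' : Submodule ℝ W')
    (hVhc : IsClosed (Vh : Set W)) (hVh'c : IsClosed (Vh' : Set W'))
    (hVhD : Vh ≤ D)
    (hdVh : ∀ (v : W) (hv : v ∈ Vh), d ⟨v, hVhD hv⟩ ∈ Vh')
    (Q : W →L[ℝ] W) (Q' : W' →L[ℝ] W')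
    (hQr : ∀ x : W, Q x ∈ Vh) (hQ'r : ∀ y : W', Q' y ∈ Vh')
    (hcomm : ∀ x : D, Q' (d x) = d ⟨Q x, hVhD (hQr x)⟩)
    (ε : ℝ) (hε0 : 0 ≤ ε) (hε1 : ε < 1)
    (hQnear : ∀ v ∈ Vh, ‖Q v - v‖ ≤ ε * ‖v‖)
    (hQ'near : ∀ v' ∈ Vh', ‖Q' v' - v'‖ ≤ ε * ‖v'‖)
    (π : W →L[ℝ] W) (π' : W' →L[ℝ] W')
    (hπmem : ∀ x : W, π x ∈ Vh) (hπ'mem : ∀ y : W', π' y ∈ Vh')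
    (hπdef : ∀ x : W, Q (π x) = Q x) (hπ'def : ∀ y : W', Q' (π' y) = Q' y) :
    ∀ x : D, π' (d x) = d ⟨π x, hVhD (hπmem x)⟩ :=
  smoothed_projections_commute_general D d Vh Vh' hVhD hdVh Q Q' hQr hcomm ε hε1 hQ'near π π' hπmem
    hπ'mem hπdef hπ'def
end

section
/- Let V and W′ be real Hilbert spaces and d : V → W′ a bounded linear map. Assume the Poincaré inequality: there is c_P > 0 such that ‖v‖_V ≤ c_P ‖d v‖_{W′} for every v ∈ V orthogonal (in V) to ker d. Let V_h ⊆ V and W′_h ⊆ W′ be closed subspaces with d(V_h) ⊆ W′_h, let π : V → V be a bounded linear operator with range contained in V_h, and let π′ : W′ → W′ be a bounded linear operator with π′ w = w for all w ∈ W′_h and π′ ∘ d = d ∘ π. Then for every v_h ∈ V_h that is orthogonal in V to ker d ∩ V_h, one has ‖v_h‖_V ≤ c_P ‖π‖ ‖d v_h‖_{W′}. -/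
open Submodule

/- A vector of `V_h` orthogonal to `ker d ∩ V_h` has minimal norm among the vectors of `V_h` with
the same image under `d`. The commuting projections turn the preimage `v ∈ (ker d)ᗮ` of `d v_h`,
whose norm the Poincaré inequality bounds, into such a vector `π v`, at the cost of the
factor `‖π‖`. -/

section

variable {𝕜 E : Type*} [RCLike 𝕜] [NormedAddCommGroup E] [InnerProductSpace 𝕜 E]

theorem norm_le_norm_of_mem_orthogonal_of_sub_mem {U : Submodule 𝕜 E} {u w : E}
    (hu : u ∈ Uᗮ) (huw : u - w ∈ U) : ‖u‖ ≤ ‖w‖ := by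
  have hinner : (inner 𝕜 u u : 𝕜) = inner 𝕜 u w := by
    have := inner_left_of_mem_orthogonal huw hu
    rwa [inner_sub_right, sub_eq_zero] at this
  have hsq : ‖u‖ ^ 2 ≤ ‖u‖ * ‖w‖ :=
    calc ‖u‖ ^ 2 = RCLike.re (inner 𝕜 u u : 𝕜) := by rw [inner_self_eq_norm_sq]
      _ = RCLike.re (inner 𝕜 u w : 𝕜) := by rw [hinner]
      _ ≤ ‖u‖ * ‖w‖ := re_inner_le_norm u w
  nlinarith [norm_nonneg u, norm_nonneg w]

end

section

variable {V W : Type*} [NormedAddCommGroup V] [InnerProductSpace ℝ V]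
  [NormedAddCommGroup W] [NormedSpace ℝ W]

theorem exists_mem_ker_orthogonal_map_eq [CompleteSpace V] (d : V →L[ℝ] W) (x : V) :
    ∃ v ∈ (LinearMap.ker (d : V →ₗ[ℝ] W))ᗮ, d v = d x := by
  set K := LinearMap.ker (d : V →ₗ[ℝ] W)
  have : CompleteSpace K := d.isClosed_ker.completeSpace_coe
  refine ⟨x - K.starProjection x, K.sub_starProjection_mem_orthogonal x, ?_⟩
  rw [map_sub, sub_eq_self]
  exact K.starProjection_apply_mem x

theorem norm_le_norm_of_mem_orthogonal_ker_inf {d : V →L[ℝ] W} {Vh : Submodule ℝ V} {vh w : V}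
    (hvh : vh ∈ Vh) (hperp : vh ∈ (LinearMap.ker (d : V →ₗ[ℝ] W) ⊓ Vh)ᗮ)
    (hw : w ∈ Vh) (hdw : d w = d vh) : ‖vh‖ ≤ ‖w‖ := by
  refine norm_le_norm_of_mem_orthogonal_of_sub_mem hperp ⟨?_, Vh.sub_mem hvh hw⟩
  simp [LinearMap.mem_ker, hdw]

end

theorem discrete_poincare_inequality_general
    {V W' : Type*}
    [NormedAddCommGroup V] [InnerProductSpace ℝ V] [CompleteSpace V]
    [NormedAddCommGroup W'] [InnerProductSpace ℝ W']
    (d : V →L[ℝ] W') (cP : ℝ)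
    (hPoincare : ∀ v ∈ (LinearMap.ker (d : V →ₗ[ℝ] W'))ᗮ, ‖v‖ ≤ cP * ‖d v‖)
    (Vh : Submodule ℝ V) (Wh' : Submodule ℝ W')
    (hdVh : ∀ v ∈ Vh, d v ∈ Wh')
    (π : V →L[ℝ] V) (hπr : ∀ v : V, π v ∈ Vh)
    (π' : W' →L[ℝ] W') (hπ'fix : ∀ w ∈ Wh', π' w = w)
    (hcomm : ∀ v : V, π' (d v) = d (π v)) :
    ∀ vh ∈ Vh, vh ∈ (LinearMap.ker (d : V →ₗ[ℝ] W') ⊓ Vh)ᗮ → ‖vh‖ ≤ cP * ‖π‖ * ‖d vh‖ := by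
  intro vh hvh hperp
  obtain ⟨v, hv, hdv⟩ := exists_mem_ker_orthogonal_map_eq d vh
  have hdπv : d (π v) = d vh := by rw [← hcomm, hdv, hπ'fix _ (hdVh vh hvh)]
  calc ‖vh‖ ≤ ‖π v‖ := norm_le_norm_of_mem_orthogonal_ker_inf hvh hperp (hπr v) hdπv
    _ ≤ ‖π‖ * ‖v‖ := π.le_opNorm v
    _ ≤ ‖π‖ * (cP * ‖d vh‖) := by
      gcongr
      simpa [hdv] using hPoincare v hv
    _ = cP * ‖π‖ * ‖d vh‖ := by ring

/-- Discrete Poincaré inequality.  Let `d : V → W′` be bounded linear between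
real Hilbert spaces with Poincaré inequality `‖v‖ ≤ c_P ‖d v‖` for `v ⟂ ker d`.  Given
closed subspaces `V_h`, `W′_h` with `d(V_h) ⊆ W′_h`, a bounded operator `π` with range in
`V_h`, and a bounded operator `π′` fixing `W′_h` with `π′ ∘ d = d ∘ π`, every `v_h ∈ V_h`
orthogonal to `ker d ∩ V_h` satisfies `‖v_h‖ ≤ c_P ‖π‖ ‖d v_h‖`. -/
theorem discrete_poincare_inequality
    {V W' : Type*}
    [NormedAddCommGroup V] [InnerProductSpace ℝ V] [CompleteSpace V]
    [NormedAddCommGroup W'] [InnerProductSpace ℝ W'] [CompleteSpace W']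
    (d : V →L[ℝ] W') (cP : ℝ) (hcP : 0 < cP)
    (hPoincare : ∀ v ∈ (LinearMap.ker (d : V →ₗ[ℝ] W'))ᗮ, ‖v‖ ≤ cP * ‖d v‖)
    (Vh : Submodule ℝ V) (Wh' : Submodule ℝ W')
    (hVhc : IsClosed (Vh : Set V)) (hWh'c : IsClosed (Wh' : Set W'))
    (hdVh : ∀ v ∈ Vh, d v ∈ Wh')
    (π : V →L[ℝ] V) (hπr : ∀ v : V, π v ∈ Vh)
    (π' : W' →L[ℝ] W') (hπ'fix : ∀ w ∈ Wh', π' w = w)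
    (hcomm : ∀ v : V, π' (d v) = d (π v)) :
    ∀ vh ∈ Vh, vh ∈ (LinearMap.ker (d : V →ₗ[ℝ] W') ⊓ Vh)ᗮ → ‖vh‖ ≤ cP * ‖π‖ * ‖d vh‖ :=
  discrete_poincare_inequality_general d cP hPoincare Vh Wh' hdVh π hπr π' hπ'fix hcomm
end
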